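/- Let X₁, X₂, … be independent zero-mean random variables with X_i ∈ [a_i, b_i] and |b_i − a_i| ≤ 1. For any α, β > 0 with αβ ≥ 1, the probability that the partial sums ever cross the linear boundary, P(∃ n ≥ 1 : Σ_{i=1}^n X_i ≥ αn + β), is at most 7·exp(−αβ/2). -/

import Mathlib

/-!
By Hoeffding's lemma every `X i` is sub-Gaussian with parameter `1/4`. Since the `X i` are
independent and centred, `exp (t S_n)` is a submartingale, and Doob's maximal inequality turns the
Chernoff bound into the maximal bound `P(∃ n ≤ N, ε ≤ S_n) ≤ exp (-2 ε² / N)`.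

Let `n₀ = ⌈β / α⌉`, so that `β ≤ α n₀ < α + β`. Every crossing time `n ≥ 1` satisfies `n ≤ N`
and `α N / 2 ≤ α n + β` for some `N = 2^j n₀`, so the crossing event is covered by the events
`{∃ n ≤ N, α N / 2 ≤ S_n}`, of probability at most `exp (-α² N / 2) ≤ exp (-αβ 2^j / 2)`.
For `αβ ≥ 1` this is at most `exp (-αβ / 2) exp (-1/2)^j`, and the geometric series sums to at most
`7 exp (-αβ / 2)`.
-/

open MeasureTheory ProbabilityTheory Finset Real
open scoped NNReal

lemma Nat.exists_le_two_pow_mul_le_max (n : ℕ) {m : ℕ} (hm : 0 < m) :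
    ∃ j, n ≤ 2 ^ j * m ∧ 2 ^ j * m ≤ max (2 * n) m := by
  have h_ex : ∃ j, n ≤ 2 ^ j * m :=
    ⟨n, (Nat.lt_two_pow_self).le.trans (Nat.le_mul_of_pos_right _ hm)⟩
  obtain ⟨j, hj, h_min⟩ : ∃ j, n ≤ 2 ^ j * m ∧ ∀ i < j, ¬n ≤ 2 ^ i * m :=
    ⟨Nat.find h_ex, Nat.find_spec h_ex, fun _ ↦ Nat.find_min h_ex⟩
  refine ⟨j, hj, ?_⟩
  rcases j with _ | j
  · simp
  · have h_prev := h_min j j.lt_succ_self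
    have h_double : 2 ^ (j + 1) * m = 2 * (2 ^ j * m) := by ring
    omega

lemma exists_le_two_pow_mul_ceil_div {α β : ℝ} (hα : 0 < α) (hβ : 0 < β) {n : ℕ} (hn : 1 ≤ n) :
    ∃ j, n ≤ 2 ^ j * ⌈β / α⌉₊ ∧ α * (2 ^ j * ⌈β / α⌉₊ : ℕ) / 2 ≤ α * n + β := by
  obtain ⟨j, hnj, hj⟩ := Nat.exists_le_two_pow_mul_le_max n (Nat.ceil_pos.mpr (div_pos hβ hα))
  refine ⟨j, hnj, ?_⟩
  have h_ceil : α * ⌈β / α⌉₊ < α + β := by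
    have := mul_lt_mul_of_pos_left (Nat.ceil_lt_add_one (div_pos hβ hα).le) hα
    rwa [mul_add, mul_div_cancel₀ _ hα.ne', mul_one, add_comm] at this
  have hn' : (1 : ℝ) ≤ n := by exact_mod_cast hn
  rcases le_max_iff.mp hj with h | h
  · have h' : ((2 ^ j * ⌈β / α⌉₊ : ℕ) : ℝ) ≤ 2 * n := by exact_mod_cast h
    nlinarith
  · have h' : ((2 ^ j * ⌈β / α⌉₊ : ℕ) : ℝ) ≤ ⌈β / α⌉₊ := by exact_mod_cast h
    nlinarith

lemma exp_neg_mul_two_pow_le {q : ℝ} (hq : 1 ≤ q) (j : ℕ) :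
    exp (-(q * 2 ^ j) / 2) ≤ exp (-q / 2) * exp (-1 / 2) ^ j := by
  rw [← exp_nat_mul, ← exp_add, exp_le_exp]
  have h_pow : (j : ℝ) + 1 ≤ 2 ^ j := by exact_mod_cast Nat.lt_two_pow_self
  nlinarith

lemma summable_exp_neg_mul_two_pow {q : ℝ} (hq : 1 ≤ q) :
    Summable fun j : ℕ ↦ exp (-(q * 2 ^ j) / 2) :=
  .of_nonneg_of_le (fun _ ↦ (exp_pos _).le) (exp_neg_mul_two_pow_le hq)
    ((summable_geometric_of_lt_one (exp_pos _).le (exp_lt_one_iff.mpr (by norm_num))).mul_left _)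

lemma tsum_exp_neg_mul_two_pow_le {q : ℝ} (hq : 1 ≤ q) :
    ∑' j : ℕ, exp (-(q * 2 ^ j) / 2) ≤ 7 * exp (-q / 2) := by
  have h_half : exp (-1 / 2) ≤ 6 / 7 := by
    rw [neg_div, exp_neg, inv_le_comm₀ (exp_pos _) (by norm_num)]
    linarith [add_one_le_exp (1 / 2)]
  have h_geom := summable_geometric_of_lt_one (exp_pos (-1 / 2)).le (by linarith)
  calc ∑' j : ℕ, exp (-(q * 2 ^ j) / 2) ≤ ∑' j : ℕ, exp (-q / 2) * exp (-1 / 2) ^ j :=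
        (summable_exp_neg_mul_two_pow hq).tsum_le_tsum (exp_neg_mul_two_pow_le hq)
          (h_geom.mul_left _)
    _ = exp (-q / 2) * (1 - exp (-1 / 2))⁻¹ := by
        rw [tsum_mul_left, tsum_geometric_of_lt_one (exp_pos _).le (by linarith)]
    _ ≤ exp (-q / 2) * 7 := by
        gcongr
        rw [inv_le_comm₀ (by linarith) (by norm_num)]
        linarith
    _ = 7 * exp (-q / 2) := mul_comm _ _

namespace ProbabilityTheory

variable {Ω : Type*} {m0 : MeasurableSpace Ω} {μ : Measure Ω}

lemma HasSubgaussianMGF.mono {Y : Ω → ℝ} {c d : ℝ≥0} (h : HasSubgaussianMGF Y c μ)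
    (hcd : c ≤ d) : HasSubgaussianMGF Y d μ where
  integrable_exp_mul := h.integrable_exp_mul
  mgf_le t := (h.mgf_le t).trans (exp_le_exp.mpr (by gcongr))

variable [IsProbabilityMeasure μ]

lemma hasSubgaussianMGF_one_div_four_of_mem_Icc {Y : Ω → ℝ} {a b : ℝ} (hY : AEMeasurable Y μ)
    (h_mem : ∀ᵐ ω ∂μ, Y ω ∈ Set.Icc a b) (h_width : |b - a| ≤ 1) (h_mean : μ[Y] = 0) :
    HasSubgaussianMGF Y (1 / 4) μ := by
  refine (hasSubgaussianMGF_of_mem_Icc_of_integral_eq_zero hY h_mem h_mean).mono ?_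
  have h_norm : ‖b - a‖₊ ≤ 1 := by
    rwa [← NNReal.coe_le_coe, coe_nnnorm, Real.norm_eq_abs]
  calc (‖b - a‖₊ / 2) ^ 2 ≤ (1 / 2) ^ 2 := by gcongr
    _ = 1 / 4 := by norm_num

lemma one_le_mgf_of_integral_eq_zero {Y : Ω → ℝ} {t : ℝ} (hY : Integrable Y μ)
    (h_exp : Integrable (fun ω ↦ exp (t * Y ω)) μ) (h_mean : μ[Y] = 0) : 1 ≤ mgf Y μ t :=
  calc 1 = ∫ ω, (1 + t * Y ω) ∂μ := by
        rw [integral_add (integrable_const 1) (hY.const_mul t), integral_const_mul, h_mean]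
        simp
    _ ≤ mgf Y μ t := integral_mono ((integrable_const 1).add (hY.const_mul t)) h_exp
        fun ω ↦ by linarith [add_one_le_exp (t * Y ω)]

variable {X : ℕ → Ω → ℝ}

lemma submartingale_exp_mul_sum_range_succ (hX : ∀ i, Measurable (X i))
    (h_indep : iIndepFun X μ) {t : ℝ} (h_exp : ∀ i, Integrable (fun ω ↦ exp (t * X i ω)) μ)
    (h_mgf : ∀ i, 1 ≤ mgf (X i) μ t) :
    Submartingale (fun n ω ↦ exp (t * ∑ i ∈ range (n + 1), X i ω))
      (Filtration.natural X fun i ↦ (hX i).stronglyMeasurable) μ := by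
  -- `𝓕 n = σ(X 0, …, X n)` contains the `n + 1` summands and is independent of `X (n + 1)`
  set 𝓕 := Filtration.natural X fun i ↦ (hX i).stronglyMeasurable
  have h_int (n : ℕ) : Integrable (fun ω ↦ exp (t * ∑ i ∈ range n, X i ω)) μ :=
    by simpa only [Finset.sum_apply] using h_indep.integrable_exp_mul_sum hX fun i _ ↦ h_exp i
  have h_adapted : StronglyAdapted 𝓕 fun n ω ↦ exp (t * ∑ i ∈ range (n + 1), X i ω) := by
    intro n
    have hXn (i : ℕ) (hi : i ∈ range (n + 1)) : Measurable[𝓕 n] (X i) :=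
      ((Filtration.stronglyAdapted_natural _ i).mono
        (𝓕.mono (Nat.lt_succ_iff.mp (mem_range.mp hi)))).measurable
    exact ((Finset.measurable_sum _ hXn).const_mul t).exp.stronglyMeasurable
  refine submartingale_nat h_adapted (fun n ↦ h_int _) fun n ↦ ?_
  set f := fun ω ↦ exp (t * ∑ i ∈ range (n + 1), X i ω)
  set g := fun ω ↦ exp (t * X (n + 1) ω)
  have h_succ : (fun ω ↦ exp (t * ∑ i ∈ range (n + 1 + 1), X i ω)) = f * g := by
    ext ω
    simp [f, g, sum_range_succ _ (n + 1), mul_add, exp_add]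
  have h_pull : μ[f * g | 𝓕 n] =ᵐ[μ] f * μ[g | 𝓕 n] :=
    condExp_mul_of_stronglyMeasurable_left (h_adapted n) (h_succ ▸ h_int _) (h_exp _)
  have h_indep_g : μ[g | 𝓕 n] =ᵐ[μ] fun _ ↦ μ[g] :=
    condExp_indep_eq (hX (n + 1)).comap_le (𝓕.le n)
      ((comap_measurable (X (n + 1))).const_mul t).exp.stronglyMeasurable
      (h_indep.indep_comap_natural_of_lt _ n.lt_succ_self)
  rw [h_succ]
  filter_upwards [h_pull, h_indep_g] with ω h_pull_ω h_indep_ω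
  rw [h_pull_ω, Pi.mul_apply, h_indep_ω]
  exact le_mul_of_one_le_right (exp_pos _).le (h_mgf _)

lemma measure_exists_le_sum_range_succ_ge_le (hX : ∀ i, Measurable (X i))
    (h_indep : iIndepFun X μ) {t : ℝ} (ht : 0 ≤ t)
    (h_exp : ∀ i, Integrable (fun ω ↦ exp (t * X i ω)) μ) (h_mgf : ∀ i, 1 ≤ mgf (X i) μ t)
    (ε : ℝ) (N : ℕ) :
    μ {ω | ∃ n ≤ N, ε ≤ ∑ i ∈ range (n + 1), X i ω}
      ≤ ENNReal.ofReal (exp (-t * ε) * mgf (fun ω ↦ ∑ i ∈ range (N + 1), X i ω) μ t) := by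
  set f := fun n ω ↦ exp (t * ∑ i ∈ range (n + 1), X i ω)
  have h_sub := submartingale_exp_mul_sum_range_succ hX h_indep h_exp h_mgf
  have h_doob := maximal_ineq h_sub (fun n ω ↦ (exp_pos _).le) (ε := (exp (t * ε)).toNNReal) N
  set A := {ω | ((exp (t * ε)).toNNReal : ℝ) ≤ (range (N + 1)).sup' nonempty_range_add_one
    fun k ↦ f k ω}
  have h_sub_A : {ω | ∃ n ≤ N, ε ≤ ∑ i ∈ range (n + 1), X i ω} ⊆ A := by
    rintro ω ⟨n, hn, hε⟩
    rw [Set.mem_ofPred_eq, Real.coe_toNNReal _ (exp_pos _).le]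
    exact le_sup'_of_le _ (mem_range.mpr (Nat.lt_succ_of_le hn))
      (exp_le_exp.mpr (mul_le_mul_of_nonneg_left hε ht))
  have h_setIntegral : ∫ ω in A, f N ω ∂μ ≤ mgf (fun ω ↦ ∑ i ∈ range (N + 1), X i ω) μ t :=
    setIntegral_le_integral (h_sub.integrable N) (ae_of_all _ fun ω ↦ (exp_pos _).le)
  have h_main : ENNReal.ofReal (exp (t * ε)) * μ {ω | ∃ n ≤ N, ε ≤ ∑ i ∈ range (n + 1), X i ω}
      ≤ ENNReal.ofReal (mgf (fun ω ↦ ∑ i ∈ range (N + 1), X i ω) μ t) :=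
    calc _ ≤ ENNReal.ofReal (exp (t * ε)) * μ A := by gcongr
      _ ≤ _ := h_doob.trans (ENNReal.ofReal_le_ofReal h_setIntegral)
  calc μ {ω | ∃ n ≤ N, ε ≤ ∑ i ∈ range (n + 1), X i ω}
      = ENNReal.ofReal (exp (-t * ε)) * (ENNReal.ofReal (exp (t * ε))
          * μ {ω | ∃ n ≤ N, ε ≤ ∑ i ∈ range (n + 1), X i ω}) := by
        rw [← mul_assoc, ← ENNReal.ofReal_mul (exp_pos _).le, ← exp_add]
        simp
    _ ≤ _ := by
        rw [ENNReal.ofReal_mul (exp_pos _).le]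
        gcongr

lemma measure_exists_le_sum_range_ge_le (hX : ∀ i, Measurable (X i)) (h_indep : iIndepFun X μ)
    {c : ℝ≥0} (h_subG : ∀ i, HasSubgaussianMGF (X i) c μ) (h_mean : ∀ i, μ[X i] = 0)
    {ε : ℝ} (hε : 0 < ε) (N : ℕ) :
    μ {ω | ∃ n ≤ N, ε ≤ ∑ i ∈ range n, X i ω} ≤ ENNReal.ofReal (exp (-ε ^ 2 / (2 * N * c))) := by
  -- if `N * c = 0` the right-hand side is `exp (-ε ^ 2 / 0) = 1`
  by_cases hNc : (N : ℝ) * c = 0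
  · simpa [mul_assoc, hNc] using prob_le_one
  obtain ⟨M, rfl⟩ := Nat.exists_eq_succ_of_ne_zero (n := N) (by rintro rfl; simp at hNc)
  have hNc_pos : 0 < ((M + 1 : ℕ) : ℝ) * c := lt_of_le_of_ne (by positivity) (Ne.symm hNc)
  have h_shift : {ω | ∃ n ≤ M + 1, ε ≤ ∑ i ∈ range n, X i ω}
      = {ω | ∃ n ≤ M, ε ≤ ∑ i ∈ range (n + 1), X i ω} := by
    ext ω
    refine ⟨fun ⟨n, hn, hεn⟩ ↦ ?_, fun ⟨n, hn, hεn⟩ ↦ ⟨n + 1, by omega, hεn⟩⟩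
    obtain ⟨k, rfl⟩ : ∃ k, n = k + 1 :=
      Nat.exists_eq_succ_of_ne_zero (by rintro rfl; simp at hεn; linarith)
    exact ⟨k, by omega, hεn⟩
  set t := ε / ((M + 1 : ℕ) * c)
  have h_sum_subG : HasSubgaussianMGF (fun ω ↦ ∑ i ∈ range (M + 1), X i ω) ((M + 1) * c) μ := by
    simpa using HasSubgaussianMGF.sum_of_iIndepFun h_indep (c := fun _ ↦ c) (s := range (M + 1))
      fun i _ ↦ h_subG i
  rw [h_shift]
  refine (measure_exists_le_sum_range_succ_ge_le hX h_indep (t := t) (by positivity)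
    (fun i ↦ (h_subG i).integrable_exp_mul t)
    (fun i ↦ one_le_mgf_of_integral_eq_zero (h_subG i).integrable
      ((h_subG i).integrable_exp_mul t) (h_mean i)) ε M).trans (ENNReal.ofReal_le_ofReal ?_)
  calc exp (-t * ε) * mgf (fun ω ↦ ∑ i ∈ range (M + 1), X i ω) μ t
      ≤ exp (-t * ε) * exp (((M + 1 : ℕ) * c : ℝ) * t ^ 2 / 2) := by
        gcongr
        simpa using h_sum_subG.mgf_le t
    _ = exp (-ε ^ 2 / (2 * (M + 1 : ℕ) * c)) := by
        rw [← exp_add]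
        congr 1
        simp only [t]
        field_simp
        ring

end ProbabilityTheory

/-- Uniform-in-time concentration for independent bounded zero-mean variables
against the linear boundary αn + β: the crossing probability is at most
7·exp(-αβ/2) whenever αβ ≥ 1. -/
theorem linear_boundary_crossing
    {Ω : Type*} [MeasurableSpace Ω] (μ : Measure Ω) [IsProbabilityMeasure μ]
    (X : ℕ → Ω → ℝ) (a b : ℕ → ℝ)
    (hmeas : ∀ i, Measurable (X i))
    (hindep : iIndepFun X μ)
    (hbdd : ∀ i ω, X i ω ∈ Set.Icc (a i) (b i))
    (hwidth : ∀ i, |b i - a i| ≤ 1)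
    (hmean : ∀ i, ∫ ω, X i ω ∂μ = 0)
    (α β : ℝ) (hα : 0 < α) (hβ : 0 < β) (hαβ : 1 ≤ α * β) :
    μ {ω | ∃ n : ℕ, 1 ≤ n ∧ α * n + β ≤ ∑ i ∈ range n, X i ω}
      ≤ ENNReal.ofReal (7 * Real.exp (-(α * β) / 2)) := by
  have h_subG (i : ℕ) : HasSubgaussianMGF (X i) (1 / 4) μ :=
    hasSubgaussianMGF_one_div_four_of_mem_Icc (hmeas i).aemeasurable (ae_of_all _ (hbdd i))
      (hwidth i) (hmean i)
  set n₀ := ⌈β / α⌉₊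
  have h_β_le : β ≤ α * n₀ := (div_le_iff₀' hα).mp (Nat.le_ceil _)
  set E : ℕ → Set Ω := fun j ↦
    {ω | ∃ n ≤ 2 ^ j * n₀, α * (2 ^ j * n₀ : ℕ) / 2 ≤ ∑ i ∈ range n, X i ω}
  have h_cover : {ω | ∃ n : ℕ, 1 ≤ n ∧ α * n + β ≤ ∑ i ∈ range n, X i ω} ⊆ ⋃ j, E j := by
    rintro ω ⟨n, hn, h_cross⟩
    obtain ⟨j, hnj, hj⟩ := exists_le_two_pow_mul_ceil_div hα hβ hn
    exact Set.mem_iUnion.mpr ⟨j, n, hnj, hj.trans h_cross⟩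
  have h_block (j : ℕ) : μ (E j) ≤ ENNReal.ofReal (exp (-(α * β * 2 ^ j) / 2)) := by
    refine (measure_exists_le_sum_range_ge_le hmeas hindep h_subG hmean
      (by positivity) _).trans (ENNReal.ofReal_le_ofReal (exp_le_exp.mpr ?_))
    push_cast
    field_simp
    linarith
  calc μ {ω | ∃ n : ℕ, 1 ≤ n ∧ α * n + β ≤ ∑ i ∈ range n, X i ω} ≤ μ (⋃ j, E j) :=
        measure_mono h_cover
    _ ≤ ∑' j, μ (E j) := measure_iUnion_le E
    _ ≤ ∑' j, ENNReal.ofReal (exp (-(α * β * 2 ^ j) / 2)) := ENNReal.tsum_le_tsum h_block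
    _ = ENNReal.ofReal (∑' j, exp (-(α * β * 2 ^ j) / 2)) :=
        (ENNReal.ofReal_tsum_of_nonneg (fun _ ↦ (exp_pos _).le)
          (summable_exp_neg_mul_two_pow hαβ)).symm
    _ ≤ ENNReal.ofReal (7 * exp (-(α * β) / 2)) :=
        ENNReal.ofReal_le_ofReal (tsum_exp_neg_mul_two_pow_le hαβ)
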